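/- Let M ≥ 4 be an even integer. Then the center of the periodic quantum Volterra algebra A_M^a equals the K-subalgebra generated by the two elements C_1 = u_{M−1} u_{M−3} ⋯ u_3 u_1 and C_2 = u_M u_{M−2} ⋯ u_4 u_2. -/
import Mathlib


noncomputable section
open scoped BigOperators Classical

abbrev K : Type := RatFunc ℂ

noncomputable def ω : K := RatFunc.X

def nu {k : ℕ} (α : Fin k → ℤ) (i : ℤ) : ℕ :=
  (Finset.univ.filter (fun j => α j = i)).card

def shift {k : ℕ} (α : Fin k → ℤ) (m : ℤ) : Fin k → ℤ := fun j => α j + m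

def Adm (k : ℕ) : Set (Fin k → ℤ) :=
  {α | (∀ j : Fin k, -((j : ℕ) : ℤ) ≤ α j ∧ α j ≤ (k : ℤ) - ((j : ℕ) : ℤ) - 1) ∧
       (∀ i : Fin k, ∀ h : (i : ℕ) + 1 < k, α i ≤ α ⟨(i : ℕ) + 1, h⟩ + 1)}

def Noninc (k : ℕ) : Set (Fin k → ℤ) :=
  {α | ∀ i : Fin k, ∀ h : (i : ℕ) + 1 < k,
      α ⟨(i : ℕ) + 1, h⟩ ≤ α i ∧ α i ≤ α ⟨(i : ℕ) + 1, h⟩ + 1}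

def NSet (k : ℕ) : Set (Fin (k+1) → ℤ) :=
  {α | α ∈ Adm (k+1) ∧ α ∈ Noninc (k+1) ∧ α (Fin.last k) = 0}

noncomputable def gbinom (m r : ℕ) : K :=
  ∏ s ∈ Finset.range r, (1 - ω ^ (m - s)) / (1 - ω ^ (s + 1))

noncomputable def P {k : ℕ} (α : Fin (k+1) → ℤ) : K :=
  if α ∈ Adm (k+1) ∩ Noninc (k+1) then
    (∏ i ∈ Finset.Icc (1 : ℤ) (α 0),
        gbinom (nu α i + nu α (i-1) - 1) (nu α i)) *
    (∏ i ∈ Finset.Icc (α (Fin.last k) + 1) (0 : ℤ),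
        gbinom (nu α i + nu α (i-1) - 1) (nu α (i-1)))
  else 0

/-- The free algebra on generators `u_n`, `n ∈ ℤ/M`. -/
abbrev FM (M : ℕ) : Type := FreeAlgebra K (ZMod M)

noncomputable def vgen {M : ℕ} (n : ZMod M) : FM M := FreeAlgebra.ι K n

/-- Defining relations of the periodic quantum Volterra algebra `A_M^a`. -/
inductive RelAM (M : ℕ) : FM M → FM M → Prop
  | comm1 (n : ZMod M) : RelAM M (vgen n * vgen (n+1)) (ω • (vgen (n+1) * vgen n))
  | comm2 (n m : ZMod M) : n - m ≠ 1 → n - m ≠ -1 →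
      RelAM M (vgen n * vgen m) (vgen m * vgen n)

/-- The periodic quantum Volterra algebra `A_M^a`. -/
abbrev AaM (M : ℕ) : Type := RingQuot (RelAM M)

noncomputable def πaM (M : ℕ) : FM M →ₐ[K] AaM M := RingQuot.mkAlgHom K (RelAM M)

/-- The generator `u_n` of `A_M^a`. -/
noncomputable def w (M : ℕ) (n : ZMod M) : AaM M := πaM M (vgen n)

/-- The monomial `u_{α+k}` of `A_M^a`, subscripts read modulo `M`. -/
noncomputable def monoM (M : ℕ) {l : ℕ} (α : Fin l → ℤ) (k : ZMod M) : AaM M :=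
  (List.ofFn (fun j => w M (((α j : ℤ) : ZMod M) + k))).prod

/-- The shifted polynomial `S^k(X_M^{(l)}) ∈ A_M^a`. -/
noncomputable def XM (M l : ℕ) (k : ZMod M) : AaM M := ∑ᶠ α ∈ Adm l, monoM M α k

/-- The periodic quantum Hamiltonian `H_{l+1} ∈ A_M^a`. -/
noncomputable def HM (M l : ℕ) : AaM M :=
  ∑ᶠ α ∈ NSet l, ∑ k ∈ Finset.range M,
    (P α * (ω ^ (l+1) - 1) / (ω ^ (nu α 0) - 1)) • monoM M α (k : ZMod M)

/-- The element `C_1 = u_{M−1} u_{M−3} ⋯ u_3 u_1` of `A_M^a`. -/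
noncomputable def Codd (M : ℕ) : AaM M :=
  (List.ofFn (fun j : Fin (M/2) => w M (((M - 1 - 2*(j : ℕ) : ℕ) : ZMod M)))).prod

/-- The element `C_2 = u_M u_{M−2} ⋯ u_4 u_2` of `A_M^a`. -/
noncomputable def Ceven (M : ℕ) : AaM M :=
  (List.ofFn (fun j : Fin (M/2) => w M (((M - 2*(j : ℕ) : ℕ) : ZMod M)))).prod


/-! ### Auxiliary development -/

section AuxDev
open Finsupp

lemma omega_ne_zero : (ω : K) ≠ 0 := RatFunc.X_ne_zero

lemma omega_pow_inj {p q : ℕ} (h : (ω : K) ^ p = (ω : K) ^ q) : p = q := by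
  have h2 : (algebraMap (Polynomial ℂ) (RatFunc ℂ)) (Polynomial.X ^ p)
      = (algebraMap (Polynomial ℂ) (RatFunc ℂ)) (Polynomial.X ^ q) := by
    simpa [map_pow, RatFunc.algebraMap_X, ω] using h
  have h3 : (Polynomial.X : Polynomial ℂ) ^ p = Polynomial.X ^ q :=
    RatFunc.algebraMap_injective ℂ h2
  have := congrArg Polynomial.natDegree h3
  simpa using this

/-- Exponent in the swap relation `u_n u_m = ω^{σ(n,m)} u_m u_n`. -/
def sgm {M : ℕ} (n m : ZMod M) : ℤ :=
  (if m = n + 1 then 1 else 0) - (if n = m + 1 then 1 else 0)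

/-- Word in the generators. -/
noncomputable def Wd (M : ℕ) (l : List (ZMod M)) : AaM M := (l.map (w M)).prod

@[simp] lemma Wd_nil (M : ℕ) : Wd M [] = 1 := rfl

@[simp] lemma Wd_cons (M : ℕ) (n : ZMod M) (l : List (ZMod M)) :
    Wd M (n :: l) = w M n * Wd M l := by simp [Wd]

lemma Wd_append (M : ℕ) (l₁ l₂ : List (ZMod M)) :
    Wd M (l₁ ++ l₂) = Wd M l₁ * Wd M l₂ := by simp [Wd]

lemma two_ne_zero_zmod (M : ℕ) (hM : 4 ≤ M) : ((2 : ℕ) : ZMod M) ≠ 0 := by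
  rw [Ne, ZMod.natCast_eq_zero_iff]
  intro h
  exact absurd (Nat.le_of_dvd (by norm_num) h) (by omega)

lemma swap_w (M : ℕ) (hM : 4 ≤ M) (n m : ZMod M) :
    w M n * w M m = (ω : K) ^ (sgm n m) • (w M m * w M n) := by
  have h2 : ((2 : ℕ) : ZMod M) ≠ 0 := two_ne_zero_zmod M hM
  by_cases h1 : m = n + 1
  · have h1' : ¬ n = m + 1 := by
      intro h
      have h0 : (2 : ZMod M) = 0 := by linear_combination -h - h1
      exact h2 (by push_cast; exact h0)
    have : sgm n m = 1 := by rw [sgm, if_pos h1, if_neg h1']; ring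
    rw [this, zpow_one]
    subst h1
    have := RingQuot.mkAlgHom_rel K (RelAM.comm1 (M := M) n)
    simpa [w, πaM, map_mul, map_smul] using this
  · by_cases h1' : n = m + 1
    · have : sgm n m = -1 := by rw [sgm, if_neg h1, if_pos h1']; ring
      rw [this]
      subst h1'
      have := RingQuot.mkAlgHom_rel K (RelAM.comm1 (M := M) m)
      have hh : w M m * w M (m+1) = (ω : K) • (w M (m+1) * w M m) := by
        simpa [w, πaM, map_mul, map_smul] using this
      rw [hh, smul_smul, zpow_neg_one, inv_mul_cancel₀ omega_ne_zero, one_smul]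
    · have : sgm n m = 0 := by simp [sgm, h1, h1']
      rw [this, zpow_zero, one_smul]
      have hr : RelAM M (vgen n * vgen m) (vgen m * vgen n) := by
        refine RelAM.comm2 n m ?_ ?_
        · intro h; exact h1' (by linear_combination h)
        · intro h; exact h1 (by linear_combination -h)
      have := RingQuot.mkAlgHom_rel K hr
      simpa [w, πaM, map_mul] using this

lemma move_w (M : ℕ) (hM : 4 ≤ M) (n : ZMod M) (l : List (ZMod M)) :
    w M n * Wd M l = (ω : K) ^ ((l.map (sgm n)).sum) • (Wd M l * w M n) := by
  induction l with
  | nil => simp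
  | cons m l ih =>
    rw [Wd_cons, ← mul_assoc, swap_w M hM n m, smul_mul_assoc, mul_assoc,
      ih, mul_smul_comm, smul_smul, ← zpow_add₀ omega_ne_zero]
    rw [List.map_cons, List.sum_cons, mul_assoc]

lemma perm_w (M : ℕ) (hM : 4 ≤ M) {l l' : List (ZMod M)} (hp : l.Perm l') :
    ∃ c : K, Wd M l = c • Wd M l' := by
  induction hp with
  | nil => exact ⟨1, by simp⟩
  | cons x h ih =>
    obtain ⟨c, hc⟩ := ih
    exact ⟨c, by rw [Wd_cons, hc, mul_smul_comm, Wd_cons]⟩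
  | swap x y l =>
    refine ⟨(ω : K) ^ (sgm y x), ?_⟩
    rw [Wd_cons, Wd_cons, ← mul_assoc, swap_w M hM y x, smul_mul_assoc,
      mul_assoc, Wd_cons, Wd_cons]
  | trans h1 h2 ih1 ih2 =>
    obtain ⟨c1, hc1⟩ := ih1
    obtain ⟨c2, hc2⟩ := ih2
    exact ⟨c1 * c2, by rw [hc1, hc2, smul_smul]⟩

end AuxDev


section AuxDev2
set_option synthInstance.maxHeartbeats 1000000
set_option maxHeartbeats 1000000

/-- Count function of a list as a finsupp. -/
noncomputable def cntF (M : ℕ) (l : List (ZMod M)) : ZMod M →₀ ℕ :=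
  (l.map (fun n => Finsupp.single n (1 : ℕ))).sum

@[simp] lemma cntF_nil (M : ℕ) : cntF M [] = 0 := rfl

@[simp] lemma cntF_cons (M : ℕ) (n : ZMod M) (l : List (ZMod M)) :
    cntF M (n :: l) = Finsupp.single n 1 + cntF M l := by simp [cntF]

lemma cntF_apply (M : ℕ) (l : List (ZMod M)) (x : ZMod M) :
    cntF M l x = l.count x := by
  induction l with
  | nil => simp
  | cons m l ih =>
    rw [cntF_cons, Finsupp.add_apply, ih, List.count_cons]
    by_cases h : m = x
    · subst h; simp [Nat.add_comm]
    · simp [h, Finsupp.single_apply]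

lemma cntF_append (M : ℕ) (l₁ l₂ : List (ZMod M)) :
    cntF M (l₁ ++ l₂) = cntF M l₁ + cntF M l₂ := by simp [cntF]

/-- The operator by which `u_n` acts in the standard representation. -/
noncomputable def Lop (M : ℕ) (n : ZMod M) :
    Module.End K ((ZMod M →₀ ℕ) →₀ K) :=
  Finsupp.lsum K (fun b => ((ω : K) ^ (b (n + 1))) • Finsupp.lsingle (b + Finsupp.single n 1))

lemma Lop_single (M : ℕ) (n : ZMod M) (b : ZMod M →₀ ℕ) (y : K) :
    Lop M n (Finsupp.single b y)
      = Finsupp.single (b + Finsupp.single n 1) ((ω : K) ^ (b (n + 1)) * y) := by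
  rw [Lop, Finsupp.lsum_single, LinearMap.smul_apply, Finsupp.lsingle_apply,
    Finsupp.smul_single, smul_eq_mul]

noncomputable def rho0 (M : ℕ) : FM M →ₐ[K] Module.End K ((ZMod M →₀ ℕ) →₀ K) :=
  FreeAlgebra.lift K (Lop M)

lemma rho_rel (M : ℕ) (hM : 4 ≤ M) :
    ∀ ⦃x y : FM M⦄, RelAM M x y → rho0 M x = rho0 M y := by
  have h2 : ((2 : ℕ) : ZMod M) ≠ 0 := two_ne_zero_zmod M hM
  intro x y hxy
  induction hxy with
  | comm1 n =>
    rw [map_mul, map_smul, map_mul]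
    simp only [rho0, vgen, FreeAlgebra.lift_ι_apply]
    apply Finsupp.lhom_ext
    intro b yv
    have hne : ¬ n = n + 1 + 1 := by
      intro h
      exact h2 (by push_cast; linear_combination -h)
    rw [Module.End.mul_apply, LinearMap.smul_apply, Module.End.mul_apply,
      Lop_single, Lop_single, Lop_single, Lop_single, Finsupp.smul_single]
    rw [show b + Finsupp.single (n+1) 1 + Finsupp.single n 1
        = b + Finsupp.single n 1 + Finsupp.single (n+1) 1 from add_right_comm _ _ _]
    congr 1
    rw [Finsupp.add_apply, Finsupp.add_apply, Finsupp.single_apply,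
      Finsupp.single_apply, if_pos rfl, if_neg hne, smul_eq_mul]
    ring
  | comm2 n m hnm1 hnm2 =>
    rw [map_mul, map_mul]
    simp only [rho0, vgen, FreeAlgebra.lift_ι_apply]
    apply Finsupp.lhom_ext
    intro b yv
    have hne1 : ¬ m = n + 1 := fun h => hnm2 (by rw [h]; ring)
    have hne2 : ¬ n = m + 1 := fun h => hnm1 (by rw [h]; ring)
    rw [Module.End.mul_apply, Module.End.mul_apply,
      Lop_single, Lop_single, Lop_single, Lop_single]
    rw [show b + Finsupp.single m 1 + Finsupp.single n 1
        = b + Finsupp.single n 1 + Finsupp.single m 1 from add_right_comm _ _ _]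
    congr 1
    rw [Finsupp.add_apply, Finsupp.add_apply, Finsupp.single_apply,
      Finsupp.single_apply, if_neg hne1, if_neg hne2]
    ring

noncomputable def rho (M : ℕ) (hM : 4 ≤ M) :
    AaM M →ₐ[K] Module.End K ((ZMod M →₀ ℕ) →₀ K) :=
  RingQuot.liftAlgHom K ⟨rho0 M, rho_rel M hM⟩

lemma rho_w (M : ℕ) (hM : 4 ≤ M) (n : ZMod M) : rho M hM (w M n) = Lop M n := by
  rw [rho, w, πaM, RingQuot.liftAlgHom_mkAlgHom_apply]
  exact FreeAlgebra.lift_ι_apply _ _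

/-- Exponent of `ω` produced when the word `l` acts on the basis vector `b`. -/
def Fexp (M : ℕ) : List (ZMod M) → (ZMod M →₀ ℕ) → ℕ
  | [], _ => 0
  | n :: l, b => (cntF M l + b) (n + 1) + Fexp M l b

lemma rho_Wd (M : ℕ) (hM : 4 ≤ M) (l : List (ZMod M)) (b : ZMod M →₀ ℕ) (y : K) :
    rho M hM (Wd M l) (Finsupp.single b y)
      = Finsupp.single (cntF M l + b) ((ω : K) ^ (Fexp M l b) * y) := by
  induction l with
  | nil => simp [Fexp]
  | cons n l ih =>
    rw [Wd_cons, map_mul, Module.End.mul_apply, ih, rho_w, Lop_single]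
    rw [cntF_cons, Fexp]
    rw [show cntF M l + b + Finsupp.single n 1
        = Finsupp.single n 1 + cntF M l + b by rw [add_comm, ← add_assoc]]
    congr 1
    ring

lemma Fexp_eq (M : ℕ) (l : List (ZMod M)) (b : ZMod M →₀ ℕ) :
    Fexp M l b = Fexp M l 0 + (l.map (fun m => b (m + 1))).sum := by
  induction l with
  | nil => simp [Fexp]
  | cons n l ih =>
    rw [Fexp, Fexp, ih, List.map_cons, List.sum_cons, Finsupp.add_apply,
      Finsupp.add_apply, Finsupp.coe_zero, Pi.zero_apply]
    ring

lemma sum_map_ite (M : ℕ) (l : List (ZMod M)) (x : ZMod M) :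
    (l.map (fun m => if m = x then (1 : ℕ) else 0)).sum = l.count x := by
  induction l with
  | nil => simp
  | cons m l ih =>
    rw [List.map_cons, List.sum_cons, ih, List.count_cons]
    by_cases h : m = x
    · subst h; simp [Nat.add_comm]
    · simp [h]

end AuxDev2


section AuxDev3
set_option synthInstance.maxHeartbeats 1000000
set_option maxHeartbeats 1000000

lemma list_range_sum (n : ℕ) (f : ℕ → ℕ) :
    ((List.range n).map f).sum = ∑ j ∈ Finset.range n, f j := by
  induction n with
  | zero => simp
  | succ n ih =>
    rw [List.range_succ, List.map_append, List.sum_append, Finset.sum_range_succ, ih]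
    simp

/-- Canonical sorted list with multiplicities `a`. -/
noncomputable def listOf (M : ℕ) (a : ZMod M →₀ ℕ) : List (ZMod M) :=
  ((List.range M).map
    (fun j => List.replicate (a ((j : ℕ) : ZMod M)) ((j : ℕ) : ZMod M))).flatten

lemma count_listOf (M : ℕ) (hM : 4 ≤ M) (a : ZMod M →₀ ℕ) (x : ZMod M) :
    (listOf M a).count x = a x := by
  haveI : NeZero M := ⟨by omega⟩
  rw [listOf, List.count_flatten, List.map_map]
  have hcomp : (List.count x ∘ fun j : ℕ =>
      List.replicate (a ((j : ℕ) : ZMod M)) ((j : ℕ) : ZMod M))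
      = fun j : ℕ => if ((j : ℕ) : ZMod M) = x then a ((j : ℕ) : ZMod M) else 0 := by
    funext j
    simp [List.count_replicate]
  rw [hcomp, list_range_sum]
  have hx : ((x.val : ℕ) : ZMod M) = x := by simp [ZMod.natCast_val, ZMod.cast_id]
  rw [Finset.sum_eq_single x.val]
  · rw [if_pos hx, hx]
  · intro b hb hbx
    rw [if_neg]
    intro hbe
    exact hbx (by rw [← ZMod.val_cast_of_lt (Finset.mem_range.mp hb), hbe])
  · intro hx'
    exact absurd (Finset.mem_range.mpr (ZMod.val_lt x)) hx'

lemma cntF_listOf (M : ℕ) (hM : 4 ≤ M) (a : ZMod M →₀ ℕ) :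
    cntF M (listOf M a) = a :=
  Finsupp.ext fun x => by rw [cntF_apply, count_listOf M hM]

lemma perm_listOf (M : ℕ) (hM : 4 ≤ M) (l : List (ZMod M)) :
    l.Perm (listOf M (cntF M l)) :=
  List.perm_iff_count.mpr fun x => by rw [count_listOf M hM, cntF_apply]

/-- The normally ordered monomial with exponents `a`. -/
noncomputable def Nmon (M : ℕ) (a : ZMod M →₀ ℕ) : AaM M := Wd M (listOf M a)

lemma rho_Nmon (M : ℕ) (hM : 4 ≤ M) (a : ZMod M →₀ ℕ) (b : ZMod M →₀ ℕ) (y : K) :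
    rho M hM (Nmon M a) (Finsupp.single b y)
      = Finsupp.single (a + b) ((ω : K) ^ (Fexp M (listOf M a) b) * y) := by
  rw [Nmon, rho_Wd, cntF_listOf M hM]

lemma Wd_mem_span (M : ℕ) (hM : 4 ≤ M) (l : List (ZMod M)) :
    Wd M l ∈ Submodule.span K (Set.range (Nmon M)) := by
  obtain ⟨c, hc⟩ := perm_w M hM (perm_listOf M hM l)
  rw [hc]
  exact Submodule.smul_mem _ _ (Submodule.subset_span ⟨_, rfl⟩)

lemma mul_mem_spanN (M : ℕ) (hM : 4 ≤ M) {x y : AaM M}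
    (hx : x ∈ Submodule.span K (Set.range (Nmon M)))
    (hy : y ∈ Submodule.span K (Set.range (Nmon M))) :
    x * y ∈ Submodule.span K (Set.range (Nmon M)) := by
  induction hx using Submodule.span_induction with
  | mem u hu =>
    obtain ⟨a, rfl⟩ := hu
    induction hy using Submodule.span_induction with
    | mem v hv =>
      obtain ⟨b, rfl⟩ := hv
      rw [Nmon, Nmon, ← Wd_append]
      exact Wd_mem_span M hM _
    | zero => rw [mul_zero]; exact Submodule.zero_mem _
    | add v w _ _ hv hw => rw [mul_add]; exact Submodule.add_mem _ hv hw
    | smul c v _ hv => rw [mul_smul_comm]; exact Submodule.smul_mem _ _ hv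
  | zero => rw [zero_mul]; exact Submodule.zero_mem _
  | add u v _ _ hu hv => rw [add_mul]; exact Submodule.add_mem _ hu hv
  | smul c u _ hu => rw [smul_mul_assoc]; exact Submodule.smul_mem _ _ hu

lemma span_N_top (M : ℕ) (hM : 4 ≤ M) :
    Submodule.span K (Set.range (Nmon M)) = ⊤ := by
  rw [eq_top_iff]
  rintro x -
  obtain ⟨y, rfl⟩ := RingQuot.mkAlgHom_surjective K (RelAM M) x
  have hπ : ∀ z : FM M, RingQuot.mkAlgHom K (RelAM M) z = πaM M z := fun _ => rfl
  induction y using FreeAlgebra.induction with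
  | grade0 r =>
    rw [AlgHom.commutes, Algebra.algebraMap_eq_smul_one]
    exact Submodule.smul_mem _ _ (by simpa using Wd_mem_span M hM [])
  | grade1 n =>
    have : RingQuot.mkAlgHom K (RelAM M) (FreeAlgebra.ι K n) = Wd M [n] := by
      simp [Wd, w, πaM, vgen]
    rw [this]
    exact Wd_mem_span M hM [n]
  | mul a b ha hb => rw [map_mul]; exact mul_mem_spanN M hM ha hb
  | add a b ha hb => rw [map_add]; exact Submodule.add_mem _ ha hb

end AuxDev3


section AuxDev4
set_option synthInstance.maxHeartbeats 1000000
set_option maxHeartbeats 1000000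

/-- Parity of a residue class (`M` even). -/
def dpar (M : ℕ) (x : ZMod M) : ℕ := x.val % 2

lemma dpar_lt (M : ℕ) (x : ZMod M) : dpar M x = 0 ∨ dpar M x = 1 := by
  unfold dpar; omega

lemma dpar_natCast (M : ℕ) (hM : 4 ≤ M) (heven : Even M) (k : ℕ) :
    dpar M ((k : ℕ) : ZMod M) = k % 2 := by
  have h2 : (2 : ℕ) ∣ M := heven.two_dvd
  rw [dpar, ZMod.val_natCast, Nat.mod_mod_of_dvd _ h2]

lemma dpar_add_two (M : ℕ) (hM : 4 ≤ M) (heven : Even M) (x : ZMod M) :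
    dpar M (x + 2) = dpar M x := by
  haveI : NeZero M := ⟨by omega⟩
  have h2 : (2 : ℕ) ∣ M := heven.two_dvd
  have hv2 : ((2 : ZMod M)).val = 2 := by
    have : ((2 : ℕ) : ZMod M) = (2 : ZMod M) := by push_cast; ring
    rw [← this, ZMod.val_natCast, Nat.mod_eq_of_lt (by omega)]
  rw [dpar, dpar, ZMod.val_add, hv2, Nat.mod_mod_of_dvd _ h2]
  omega

/-- The word representing `Codd`. -/
noncomputable def LCodd (M : ℕ) : List (ZMod M) :=
  List.ofFn (fun j : Fin (M/2) => ((M - 1 - 2*(j : ℕ) : ℕ) : ZMod M))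

/-- The word representing `Ceven`. -/
noncomputable def LCev (M : ℕ) : List (ZMod M) :=
  List.ofFn (fun j : Fin (M/2) => ((M - 2*(j : ℕ) : ℕ) : ZMod M))

lemma Codd_eq (M : ℕ) : Codd M = Wd M (LCodd M) := by
  rw [Wd, LCodd, List.map_ofFn, Codd]; rfl

lemma Ceven_eq (M : ℕ) : Ceven M = Wd M (LCev M) := by
  rw [Wd, LCev, List.map_ofFn, Ceven]; rfl

lemma count_ofFn (M : ℕ) {k : ℕ} (g : Fin k → ZMod M) (x : ZMod M) :
    (List.ofFn g).count x = ∑ j : Fin k, (if g j = x then 1 else 0) := by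
  rw [← sum_map_ite M (List.ofFn g) x, List.map_ofFn, List.sum_ofFn]
  rfl

lemma count_inj_char (M : ℕ) {k : ℕ} (g : Fin k → ZMod M) (x : ZMod M)
    (hinj : Function.Injective g) :
    (List.ofFn g).count x = if (∃ j, g j = x) then 1 else 0 := by
  rw [count_ofFn]
  by_cases hex : ∃ j, g j = x
  · rw [if_pos hex]
    obtain ⟨j0, hj0⟩ := hex
    rw [Finset.sum_eq_single j0]
    · rw [if_pos hj0]
    · intro b _ hb
      rw [if_neg]
      intro hbe
      exact hb (hinj (hbe.trans hj0.symm))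
    · intro h; exact absurd (Finset.mem_univ j0) h
  · rw [if_neg hex]
    refine Finset.sum_eq_zero fun j _ => ?_
    rw [if_neg fun h => hex ⟨j, h⟩]

lemma exists_LCodd (M : ℕ) (hM : 4 ≤ M) (heven : Even M) (x : ZMod M) :
    (∃ j : Fin (M/2), ((M - 1 - 2*(j : ℕ) : ℕ) : ZMod M) = x) ↔ dpar M x = 1 := by
  haveI : NeZero M := ⟨by omega⟩
  have hM2 : M % 2 = 0 := Nat.even_iff.mp heven
  constructor
  · rintro ⟨j, rfl⟩
    have hj : (j : ℕ) < M / 2 := j.isLt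
    rw [dpar_natCast M hM heven]
    omega
  · intro hd
    have hv : x.val < M := ZMod.val_lt x
    have hd' : x.val % 2 = 1 := hd
    refine ⟨⟨(M - 1 - x.val) / 2, by omega⟩, ?_⟩
    have h1 : M - 1 - 2 * ((M - 1 - x.val) / 2) = x.val := by omega
    rw [h1]
    simp [ZMod.natCast_val, ZMod.cast_id]

lemma exists_LCev (M : ℕ) (hM : 4 ≤ M) (heven : Even M) (x : ZMod M) :
    (∃ j : Fin (M/2), ((M - 2*(j : ℕ) : ℕ) : ZMod M) = x) ↔ dpar M x = 0 := by
  haveI : NeZero M := ⟨by omega⟩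
  have hM2 : M % 2 = 0 := Nat.even_iff.mp heven
  constructor
  · rintro ⟨j, rfl⟩
    have hj : (j : ℕ) < M / 2 := j.isLt
    rw [dpar_natCast M hM heven]
    omega
  · intro hd
    have hv : x.val < M := ZMod.val_lt x
    have hd' : x.val % 2 = 0 := hd
    by_cases h0 : x.val = 0
    · refine ⟨⟨0, by omega⟩, ?_⟩
      have : ((M : ℕ) : ZMod M) = 0 := ZMod.natCast_self M
      have hx0 : x = 0 := by
        have := ZMod.natCast_val (R := ZMod M) x
        rw [h0] at this
        simpa [ZMod.cast_id] using this.symm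
      simpa [this, hx0] using rfl
    · refine ⟨⟨(M - x.val) / 2, by omega⟩, ?_⟩
      have h1 : M - 2 * ((M - x.val) / 2) = x.val := by omega
      rw [h1]
      simp [ZMod.natCast_val, ZMod.cast_id]

lemma inj_gOdd (M : ℕ) (hM : 4 ≤ M) :
    Function.Injective (fun j : Fin (M/2) => ((M - 1 - 2*(j : ℕ) : ℕ) : ZMod M)) := by
  intro j j' h
  simp only at h
  have hj : (j : ℕ) < M / 2 := j.isLt
  have hj' : (j' : ℕ) < M / 2 := j'.isLt
  have h1 := ZMod.val_cast_of_lt (a := M - 1 - 2*(j : ℕ)) (n := M) (by omega)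
  have h2 := ZMod.val_cast_of_lt (a := M - 1 - 2*(j' : ℕ)) (n := M) (by omega)
  have : M - 1 - 2*(j : ℕ) = M - 1 - 2*(j' : ℕ) := by
    rw [← h1, ← h2, h]
  have : (j : ℕ) = (j' : ℕ) := by omega
  exact Fin.ext this

lemma inj_gEv (M : ℕ) (hM : 4 ≤ M) :
    Function.Injective (fun j : Fin (M/2) => ((M - 2*(j : ℕ) : ℕ) : ZMod M)) := by
  intro j j' h
  simp only at h
  have hj : (j : ℕ) < M / 2 := j.isLt
  have hj' : (j' : ℕ) < M / 2 := j'.isLt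
  have hval : (M - 2*(j : ℕ)) % M = (M - 2*(j' : ℕ)) % M := by
    have h1 := ZMod.val_natCast (n := M) (M - 2*(j : ℕ))
    have h2 := ZMod.val_natCast (n := M) (M - 2*(j' : ℕ))
    rw [← h1, ← h2, h]
  by_cases hz : (j : ℕ) = 0
  · by_cases hz' : (j' : ℕ) = 0
    · exact Fin.ext (by omega)
    · exfalso
      rw [hz] at hval
      simp only [Nat.mul_zero, Nat.sub_zero, Nat.mod_self] at hval
      rw [Nat.mod_eq_of_lt (by omega)] at hval
      omega
  · by_cases hz' : (j' : ℕ) = 0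
    · exfalso
      rw [hz'] at hval
      simp only [Nat.mul_zero, Nat.sub_zero, Nat.mod_self] at hval
      rw [Nat.mod_eq_of_lt (by omega)] at hval
      omega
    · rw [Nat.mod_eq_of_lt (by omega), Nat.mod_eq_of_lt (by omega)] at hval
      exact Fin.ext (by omega)

lemma count_LCodd (M : ℕ) (hM : 4 ≤ M) (heven : Even M) (x : ZMod M) :
    (LCodd M).count x = if dpar M x = 1 then 1 else 0 := by
  rw [LCodd, count_inj_char M _ x (inj_gOdd M hM)]
  by_cases h : dpar M x = 1
  · rw [if_pos h, if_pos ((exists_LCodd M hM heven x).mpr h)]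
  · rw [if_neg h, if_neg (fun he => h ((exists_LCodd M hM heven x).mp he))]

lemma count_LCev (M : ℕ) (hM : 4 ≤ M) (heven : Even M) (x : ZMod M) :
    (LCev M).count x = if dpar M x = 0 then 1 else 0 := by
  rw [LCev, count_inj_char M _ x (inj_gEv M hM)]
  by_cases h : dpar M x = 0
  · rw [if_pos h, if_pos ((exists_LCev M hM heven x).mpr h)]
  · rw [if_neg h, if_neg (fun he => h ((exists_LCev M hM heven x).mp he))]

lemma Wd_flatten_replicate (M : ℕ) (r : ℕ) (l : List (ZMod M)) :
    Wd M ((List.replicate r l).flatten) = (Wd M l) ^ r := by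
  induction r with
  | zero => simp
  | succ r ih =>
    rw [List.replicate_succ, List.flatten_cons, Wd_append, ih, pow_succ']

end AuxDev4


section AuxDev5
set_option synthInstance.maxHeartbeats 1000000
set_option maxHeartbeats 1000000

lemma sum_sgm (M : ℕ) (m : ZMod M) (l : List (ZMod M)) :
    (l.map (sgm m)).sum = (l.count (m + 1) : ℤ) - (l.count (m - 1) : ℤ) := by
  induction l with
  | nil => simp
  | cons i l ih =>
    rw [List.map_cons, List.sum_cons, ih, List.count_cons, List.count_cons, sgm]
    have hiff : (if m = i + 1 then (1:ℤ) else 0) = if i = m - 1 then 1 else 0 := by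
      by_cases h : m = i + 1
      · rw [if_pos h, if_pos (by rw [h]; ring)]
      · rw [if_neg h, if_neg (fun hh => h (by rw [hh]; ring))]
    rw [hiff]
    simp only [beq_iff_eq]
    by_cases h1 : i = m + 1 <;> by_cases h2 : i = m - 1 <;>
      simp only [h1, h2, if_true, if_false] <;> push_cast <;> ring

lemma w_comm_Wd (M : ℕ) (hM : 4 ≤ M) (l : List (ZMod M))
    (hcnt : ∀ m : ZMod M, l.count (m + 1) = l.count (m - 1)) (m : ZMod M) :
    w M m * Wd M l = Wd M l * w M m := by
  rw [move_w M hM, sum_sgm, hcnt m, sub_self, zpow_zero, one_smul]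

lemma comm_all (M : ℕ) {z : AaM M} (hz : ∀ m, w M m * z = z * w M m) (b : AaM M) :
    b * z = z * b := by
  obtain ⟨y, rfl⟩ := RingQuot.mkAlgHom_surjective K (RelAM M) b
  induction y using FreeAlgebra.induction with
  | grade0 r => rw [AlgHom.commutes]; exact Algebra.commutes r z
  | grade1 n => exact hz n
  | mul a b ha hb => rw [map_mul, mul_assoc, hb, ← mul_assoc, ha, mul_assoc]
  | add a b ha hb => rw [map_add, add_mul, mul_add, ha, hb]

lemma Codd_central (M : ℕ) (hM : 4 ≤ M) (heven : Even M) :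
    Codd M ∈ Subalgebra.center K (AaM M) := by
  refine Subalgebra.mem_center_iff.mpr (comm_all M fun m => ?_)
  rw [Codd_eq]
  refine w_comm_Wd M hM _ (fun m' => ?_) m
  rw [count_LCodd M hM heven, count_LCodd M hM heven,
    show m' + 1 = (m' - 1) + 2 by ring, dpar_add_two M hM heven]

lemma Ceven_central (M : ℕ) (hM : 4 ≤ M) (heven : Even M) :
    Ceven M ∈ Subalgebra.center K (AaM M) := by
  refine Subalgebra.mem_center_iff.mpr (comm_all M fun m => ?_)
  rw [Ceven_eq]
  refine w_comm_Wd M hM _ (fun m' => ?_) m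
  rw [count_LCev M hM heven, count_LCev M hM heven,
    show m' + 1 = (m' - 1) + 2 by ring, dpar_add_two M hM heven]

lemma adjoin_le_center (M : ℕ) (hM : 4 ≤ M) (heven : Even M) :
    Algebra.adjoin K {Codd M, Ceven M} ≤ Subalgebra.center K (AaM M) := by
  refine Algebra.adjoin_le ?_
  rintro z (rfl | rfl)
  · exact Codd_central M hM heven
  · exact Ceven_central M hM heven

end AuxDev5


section AuxDev6
set_option synthInstance.maxHeartbeats 1000000
set_option maxHeartbeats 1000000

lemma sum_single_eval (M : ℕ) (f : (ZMod M →₀ ℕ) →₀ K) (g : (ZMod M →₀ ℕ) → K)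
    (n : ZMod M) (a0 : ZMod M →₀ ℕ) :
    (f.sum fun a c => c • Finsupp.single (a + Finsupp.single n 1) (g a)) (a0 + Finsupp.single n 1)
      = f a0 * g a0 := by
  rw [Finsupp.sum_apply, Finsupp.sum_eq_single a0]
  · rw [Finsupp.smul_apply, Finsupp.single_apply, if_pos rfl, smul_eq_mul]
  · intro b hb hbne
    rw [Finsupp.smul_apply, Finsupp.single_apply, if_neg, smul_zero]
    intro h
    apply hbne
    ext x
    have := DFunLike.congr_fun h x
    simp only [Finsupp.add_apply] at this
    omega
  · intro _
    simp

lemma central_exponents (M : ℕ) (hM : 4 ≤ M) (f : (ZMod M →₀ ℕ) →₀ K)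
    (hc : ∀ n : ZMod M, w M n * (f.sum fun a c => c • Nmon M a)
        = (f.sum fun a c => c • Nmon M a) * w M n)
    {a0 : ZMod M →₀ ℕ} (ha0 : f a0 ≠ 0) (n : ZMod M) :
    a0 (n - 1) = a0 (n + 1) := by
  have hXv : ∀ v : (ZMod M →₀ ℕ) →₀ K,
      rho M hM (f.sum fun a c => c • Nmon M a) v
        = f.sum fun a c => c • rho M hM (Nmon M a) v := by
    intro v
    rw [map_finsuppSum]
    simp only [Finsupp.sum]
    rw [LinearMap.sum_apply]
    exact Finset.sum_congr rfl fun a _ => by rw [map_smul, LinearMap.smul_apply]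
  have hL : (rho M hM (w M n * (f.sum fun a c => c • Nmon M a))) (Finsupp.single 0 1)
      = f.sum fun a c => c • Finsupp.single (a + Finsupp.single n 1)
          ((ω : K) ^ (a (n+1) + Fexp M (listOf M a) 0)) := by
    rw [map_mul, Module.End.mul_apply, rho_w, hXv]
    rw [map_finsuppSum]
    refine Finsupp.sum_congr fun a _ => ?_
    rw [map_smul, rho_Nmon M hM, Lop_single]
    simp only [add_zero, mul_one]
    rw [← pow_add]
  have hR : (rho M hM ((f.sum fun a c => c • Nmon M a) * w M n)) (Finsupp.single 0 1)
      = f.sum fun a c => c • Finsupp.single (a + Finsupp.single n 1)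
          ((ω : K) ^ (Fexp M (listOf M a) (Finsupp.single n 1))) := by
    rw [map_mul, Module.End.mul_apply, rho_w]
    have h0 : Lop M n (Finsupp.single 0 1) = Finsupp.single (Finsupp.single n 1) 1 := by
      rw [Lop_single]
      simp
    rw [h0, hXv]
    refine Finsupp.sum_congr fun a _ => ?_
    rw [rho_Nmon M hM, mul_one]
  have hv : (rho M hM (w M n * (f.sum fun a c => c • Nmon M a))) (Finsupp.single 0 1)
      = (rho M hM ((f.sum fun a c => c • Nmon M a) * w M n)) (Finsupp.single 0 1) := by
    rw [hc n]
  rw [hL, hR] at hv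
  have hpt := DFunLike.congr_fun hv (a0 + Finsupp.single n 1)
  rw [sum_single_eval, sum_single_eval] at hpt
  have hωeq := mul_left_cancel₀ ha0 hpt
  have hexp := omega_pow_inj hωeq
  have hF : Fexp M (listOf M a0) (Finsupp.single n 1)
      = Fexp M (listOf M a0) 0 + a0 (n - 1) := by
    rw [Fexp_eq]
    congr 1
    have hfun : (fun m : ZMod M => (Finsupp.single n (1:ℕ)) (m+1))
        = fun m : ZMod M => if m = n - 1 then 1 else 0 := by
      funext m
      rw [Finsupp.single_apply]
      by_cases h : n = m + 1
      · rw [if_pos h, if_pos (by rw [h]; ring)]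
      · rw [if_neg h, if_neg (fun hh => h (by rw [hh]; ring))]
    rw [hfun, sum_map_ite, count_listOf M hM]
  rw [hF] at hexp
  omega

lemma a_struct (M : ℕ) (hM : 4 ≤ M) (a : ZMod M →₀ ℕ)
    (hstep : ∀ m : ZMod M, a (m + 2) = a m) (x : ZMod M) :
    a x = if dpar M x = 1 then a 1 else a 0 := by
  haveI : NeZero M := ⟨by omega⟩
  have hnat : ∀ (k : ℕ) (y : ZMod M), a (y + ((2 * k : ℕ) : ZMod M)) = a y := by
    intro k
    induction k with
    | zero => intro y; simp
    | succ k ih =>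
      intro y
      have hcast : (y + ((2 * (k+1) : ℕ) : ZMod M)) = (y + 2) + ((2 * k : ℕ) : ZMod M) := by
        push_cast; ring
      rw [hcast, ih, hstep]
  have hx : ((x.val : ℕ) : ZMod M) = x := by simp [ZMod.natCast_val, ZMod.cast_id]
  rcases Nat.even_or_odd x.val with he | ho
  · have h0 : dpar M x = 0 := by
      have := Nat.even_iff.mp he
      unfold dpar; omega
    rw [if_neg (by omega)]
    obtain ⟨k, hk⟩ : ∃ k, x.val = 2 * k := ⟨x.val / 2, by have := Nat.even_iff.mp he; omega⟩
    have hxe : x = (0 : ZMod M) + ((2 * k : ℕ) : ZMod M) := by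
      rw [← hx, hk]; push_cast; ring
    rw [hxe, hnat]
  · have h1 : dpar M x = 1 := by
      have := Nat.odd_iff.mp ho
      unfold dpar; omega
    rw [if_pos h1]
    obtain ⟨k, hk⟩ : ∃ k, x.val = 2 * k + 1 := ⟨x.val / 2, by have := Nat.odd_iff.mp ho; omega⟩
    have hxo : x = (1 : ZMod M) + ((2 * k : ℕ) : ZMod M) := by
      rw [← hx, hk]; push_cast; ring
    rw [hxo, hnat]

lemma Nmon_mem_adjoin (M : ℕ) (hM : 4 ≤ M) (heven : Even M) (a : ZMod M →₀ ℕ)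
    (hstep : ∀ m : ZMod M, a (m + 2) = a m) :
    Nmon M a ∈ Algebra.adjoin K {Codd M, Ceven M} := by
  have hperm : (listOf M a).Perm
      ((List.replicate (a 1) (LCodd M)).flatten ++ (List.replicate (a 0) (LCev M)).flatten) := by
    refine List.perm_iff_count.mpr fun x => ?_
    rw [count_listOf M hM, List.count_append, List.count_flatten, List.count_flatten,
      List.map_replicate, List.map_replicate, List.sum_replicate, List.sum_replicate,
      smul_eq_mul, smul_eq_mul, count_LCodd M hM heven, count_LCev M hM heven,
      a_struct M hM a hstep x]
    rcases dpar_lt M x with h | h <;> simp [h]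
  obtain ⟨c, hc⟩ := perm_w M hM hperm
  have hT : Wd M ((List.replicate (a 1) (LCodd M)).flatten
        ++ (List.replicate (a 0) (LCev M)).flatten)
      = Codd M ^ (a 1) * Ceven M ^ (a 0) := by
    rw [Wd_append, Wd_flatten_replicate, Wd_flatten_replicate, Codd_eq, Ceven_eq]
  rw [Nmon, hc, hT]
  have h1 : Codd M ∈ Algebra.adjoin K {Codd M, Ceven M} := Algebra.subset_adjoin (by simp)
  have h2 : Ceven M ∈ Algebra.adjoin K {Codd M, Ceven M} := Algebra.subset_adjoin (by simp)
  exact Subalgebra.smul_mem _ (mul_mem (pow_mem h1 _) (pow_mem h2 _)) c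

end AuxDev6

/-- for even `M ≥ 4`, the center of `A_M^a` is generated by
`C_1 = u_{M−1} ⋯ u_1` and `C_2 = u_M ⋯ u_2`. -/
theorem stmt15 (M : ℕ) (hM : 4 ≤ M) (heven : Even M) :
    Subalgebra.center K (AaM M) = Algebra.adjoin K {Codd M, Ceven M} := by
  refine le_antisymm ?_ (adjoin_le_center M hM heven)
  intro x hx
  have hsp : x ∈ Submodule.span K (Set.range (Nmon M)) := by
    rw [span_N_top M hM]; exact Submodule.mem_top
  obtain ⟨f, hf⟩ := Finsupp.mem_span_range_iff_exists_finsupp.mp hsp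
  have hcomm : ∀ n : ZMod M, w M n * (f.sum fun a c => c • Nmon M a)
      = (f.sum fun a c => c • Nmon M a) * w M n := by
    intro n
    rw [hf]
    exact Subalgebra.mem_center_iff.mp hx (w M n)
  rw [← hf, Finsupp.sum]
  refine Subalgebra.sum_mem _ fun a ha => ?_
  refine Subalgebra.smul_mem _ ?_ _
  refine Nmon_mem_adjoin M hM heven a fun m => ?_
  have hkey := central_exponents M hM f hcomm (Finsupp.mem_support_iff.mp ha) (m + 1)
  rw [show m + 1 - 1 = m by ring, show m + 1 + 1 = m + 2 by ring] at hkey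
  exact hkey.symm
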